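/- Let T > 0, let 0 < τ₁ < ⋯ < τ_N < T, let K : ℝ → ℝ → Matrix (Fin n) (Fin n) ℝ be measurable and bounded with K(s,t) = 0 for t ≥ s, and let L : ℝ → Fin N → Matrix (Fin n) (Fin n) ℝ be measurable and bounded with L(s, i) = 0 whenever s ≤ τ_i. Write L̂(i,j) := L(τ_i, j) and let P(j,i) and Λ(σ) be the increasing paths and path weights built from L̂ (Λ(σ) := L̂(i,k_α)·⋯·L̂(k₁,j) for σ = (j < k₁ < ⋯ < k_α < i), Λ = 1 on trivial paths). Let h : [0,T] → ℝⁿ be bounded measurable and define 𝐊(s,t) := K(s,t) + ∑_{i=1}^N ∑_{j=1}^N ∑_{σ ∈ P(j,i)} L(s,i)·Λ(σ)·K(τ_j,t) and 𝐡(s) := h(s) + ∑_{i=1}^N ∑_{j=1}^N ∑_{σ ∈ P(j,i)} L(s,i)·Λ(σ)·h(τ_j). Then a bounded measurable function x : [0,T] → ℝⁿ that is left-continuous at each τ_i satisfies the impulsive linear Volterra equation x(s) = h(s) + ∫₀^s K(s,t)x(t)dt + ∑_{i : τ_i < s} L(s,i)·x(τ_i) for all s ∈ [0,T] if and only if it satisfies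 the non-impulsive equation x(s) = 𝐡(s) + ∫₀^s 𝐊(s,t)x(t)dt for all s ∈ [0,T]. -/

import Mathlib

/-! Write `F(s) = h(s) + ∫₀ˢ K(s,t)x(t)dt`, `c = (F(τⱼ))ⱼ`, `ξ = (x(τⱼ))ⱼ`, and let `W` be the
block operator of the path sums `∑_{σ∈P(j,i)} Λ(σ)`. Since `∫₀ˢ K(τⱼ,t)x(t)dt = F(τⱼ) - h(τⱼ)` for
`τⱼ ≤ s` (`K` vanishes above the diagonal), while for `s ≤ τⱼ` every weight `L(s,i)Λ(σ)` with
`σ ∈ P(j,i)` vanishes, the non-impulsive equation reads `x(s) = F(s) + ∑ᵢ L(s,i)(W c)ᵢ`; the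
impulsive one reads the same with `ξ` in place of `W c`. Evaluating either at the impulse times
gives `ξ = c + L̂ y` with `y = ξ`, resp. `y = W c`. Splitting off the first vertex of a path gives
`W (1 - L̂) = 1`, so in finite dimension `W = (1 - L̂)⁻¹`, and in both cases `ξ = W c`. -/

open Set Filter

attribute [local instance] Matrix.linftyOpNormedAddCommGroup Matrix.linftyOpNormedSpace

/-- The weight of a chain `[k₀, k₁, …, k_r]` of indices: the product
`L(k_r, k_{r−1}) · ⋯ · L(k₁, k₀)` (the identity matrix for chains with at most one vertex). -/
def chainWeight {ι : Type*} {n : ℕ} (L : ι → ι → Matrix (Fin n) (Fin n) ℝ) :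
    List ι → Matrix (Fin n) (Fin n) ℝ
  | [] => 1
  | [_] => 1
  | a :: b :: rest => chainWeight L (b :: rest) * L b a

/-- The set of increasing paths `σ = (j = k₀ < k₁ < ⋯ < k_α < k_{α+1} = i)` from `j` to `i`,
encoded as the finset of vertices of the path; it is empty when `i < j` and consists only of
the trivial path when `j = i`. -/
def incPaths {N : ℕ} (j i : Fin N) : Finset (Finset (Fin N)) :=
  Finset.univ.filter (fun σ => j ∈ σ ∧ i ∈ σ ∧ ∀ k ∈ σ, j ≤ k ∧ k ≤ i)

/-- The weight `Λ(σ) = L̂(i,k_α)·L̂(k_α,k_{α−1})·⋯·L̂(k₁,j)` of an increasing path. -/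
def pathWeight {N n : ℕ} (L : Fin N → Fin N → Matrix (Fin n) (Fin n) ℝ)
    (σ : Finset (Fin N)) : Matrix (Fin n) (Fin n) ℝ :=
  chainWeight L (σ.sort (· ≤ ·))


open Matrix

section BlockOperator

variable {ι m R : Type*} [Fintype ι] [Fintype m] [CommSemiring R]

def blockMulVecLin (M : ι → ι → Matrix m m R) : Module.End R (ι → m → R) :=
  LinearMap.pi fun i => ∑ j, (M i j).mulVecLin ∘ₗ LinearMap.proj j

@[simp]
lemma blockMulVecLin_apply (M : ι → ι → Matrix m m R) (v : ι → m → R) (i : ι) :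
    blockMulVecLin M v i = ∑ j, M i j *ᵥ v j := by
  simp [blockMulVecLin]

lemma blockMulVecLin_mul (M M' : ι → ι → Matrix m m R) :
    blockMulVecLin M * blockMulVecLin M' = blockMulVecLin fun i k => ∑ j, M i j * M' j k := by
  refine LinearMap.ext fun v => funext fun i => ?_
  simp only [Module.End.mul_apply, blockMulVecLin_apply, mulVec_sum, sum_mulVec, mulVec_mulVec]
  exact Finset.sum_comm

end BlockOperator

section IncreasingPaths

variable {N n : ℕ}

@[simp]
lemma mem_incPaths {j i : Fin N} {σ : Finset (Fin N)} :
    σ ∈ incPaths j i ↔ j ∈ σ ∧ i ∈ σ ∧ ∀ k ∈ σ, j ≤ k ∧ k ≤ i := by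
  simp [incPaths]

lemma incPaths_self (i : Fin N) : incPaths i i = {{i}} := by
  ext σ
  simp only [mem_incPaths, Finset.mem_singleton, Finset.eq_singleton_iff_unique_mem]
  exact ⟨fun ⟨hi, _, hσ⟩ => ⟨hi, fun k hk => le_antisymm (hσ k hk).2 (hσ k hk).1⟩,
    fun ⟨hi, hσ⟩ => ⟨hi, hi, fun k hk => by simp [hσ k hk]⟩⟩

lemma incPaths_eq_empty_of_lt {j i : Fin N} (hij : i < j) : incPaths j i = ∅ :=
  Finset.eq_empty_of_forall_notMem fun _ hσ =>
    (mem_incPaths.1 hσ).2.2 j (mem_incPaths.1 hσ).1 |>.2.not_gt hij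

lemma eq_of_mem_incPaths {k k' i : Fin N} {σ : Finset (Fin N)} (hσ : σ ∈ incPaths k i)
    (hσ' : σ ∈ incPaths k' i) : k = k' :=
  le_antisymm ((mem_incPaths.1 hσ).2.2 k' (mem_incPaths.1 hσ').1).1
    ((mem_incPaths.1 hσ').2.2 k (mem_incPaths.1 hσ).1).1

lemma erase_insert_of_mem_incPaths {j k i : Fin N} {σ : Finset (Fin N)} (hjk : j < k)
    (hσ : σ ∈ incPaths k i) : (insert j σ).erase j = σ :=
  Finset.erase_insert fun hj => ((mem_incPaths.1 hσ).2.2 j hj).1.not_gt hjk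

lemma incPaths_eq_biUnion {j i : Fin N} (hji : j < i) :
    incPaths j i = (Finset.Ioi j).biUnion fun k => (incPaths k i).image (insert j) := by
  ext σ
  simp only [Finset.mem_biUnion, Finset.mem_Ioi, Finset.mem_image, mem_incPaths]
  constructor
  · rintro ⟨hj, hi, hσ⟩
    have hne : (σ.erase j).Nonempty := ⟨i, Finset.mem_erase.2 ⟨hji.ne', hi⟩⟩
    obtain ⟨hkj, hk⟩ := Finset.mem_erase.1 (Finset.min'_mem _ hne)
    refine ⟨_, lt_of_le_of_ne (hσ _ hk).1 (Ne.symm hkj), σ.erase j,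
      ⟨Finset.min'_mem _ hne, Finset.mem_erase.2 ⟨hji.ne', hi⟩, fun m hm =>
        ⟨Finset.min'_le _ _ hm, (hσ m (Finset.mem_of_mem_erase hm)).2⟩⟩,
      Finset.insert_erase hj⟩
  · rintro ⟨k, hjk, σ, ⟨-, hi, hσ⟩, rfl⟩
    refine ⟨Finset.mem_insert_self _ _, Finset.mem_insert_of_mem hi, fun m hm => ?_⟩
    rcases Finset.mem_insert.1 hm with rfl | hm
    · exact ⟨le_rfl, hji.le⟩
    · exact ⟨hjk.le.trans (hσ m hm).1, (hσ m hm).2⟩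

lemma pathWeight_singleton (L : Fin N → Fin N → Matrix (Fin n) (Fin n) ℝ) (i : Fin N) :
    pathWeight L {i} = 1 := by
  simp [pathWeight, chainWeight]

lemma pathWeight_insert (L : Fin N → Fin N → Matrix (Fin n) (Fin n) ℝ) {σ : Finset (Fin N)}
    {j k : Fin N} (hk : k ∈ σ) (hkσ : ∀ m ∈ σ, k ≤ m) (hjk : j < k) :
    pathWeight L (insert j σ) = pathWeight L σ * L k j := by
  have hsort : σ.sort (· ≤ ·) = k :: (σ.erase k).sort (· ≤ ·) := by
    conv_lhs => rw [← Finset.insert_erase hk]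
    exact Finset.sort_insert _ (fun m hm => hkσ m (Finset.mem_of_mem_erase hm))
      (Finset.notMem_erase k σ)
  have hsort' : (insert j σ).sort (· ≤ ·) = j :: σ.sort (· ≤ ·) :=
    Finset.sort_insert _ (fun m hm => (hjk.trans_le (hkσ m hm)).le)
      fun hj => (hjk.trans_le (hkσ j hj)).false
  rw [pathWeight, hsort', hsort, chainWeight, ← hsort, pathWeight]

-- For strictly lower triangular `L`, `pathWeightSum L j i` is the `(i, j)` block of `(1 - L)⁻¹`.
def pathWeightSum (L : Fin N → Fin N → Matrix (Fin n) (Fin n) ℝ) (j i : Fin N) :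
    Matrix (Fin n) (Fin n) ℝ :=
  ∑ σ ∈ incPaths j i, pathWeight L σ

lemma pathWeightSum_self (L : Fin N → Fin N → Matrix (Fin n) (Fin n) ℝ) (i : Fin N) :
    pathWeightSum L i i = 1 := by
  rw [pathWeightSum, incPaths_self, Finset.sum_singleton, pathWeight_singleton]

lemma pathWeightSum_eq_zero_of_lt (L : Fin N → Fin N → Matrix (Fin n) (Fin n) ℝ) {j i : Fin N}
    (hij : i < j) : pathWeightSum L j i = 0 := by
  rw [pathWeightSum, incPaths_eq_empty_of_lt hij, Finset.sum_empty]

lemma pathWeightSum_of_lt (L : Fin N → Fin N → Matrix (Fin n) (Fin n) ℝ) {j i : Fin N}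
    (hji : j < i) :
    pathWeightSum L j i = ∑ k ∈ Finset.Ioi j, pathWeightSum L k i * L k j := by
  rw [pathWeightSum, incPaths_eq_biUnion hji, Finset.sum_biUnion]
  · refine Finset.sum_congr rfl fun k hk => ?_
    have hjk : j < k := Finset.mem_Ioi.1 hk
    rw [Finset.sum_image fun σ hσ σ' hσ' h => by
        rw [← erase_insert_of_mem_incPaths hjk hσ, ← erase_insert_of_mem_incPaths hjk hσ', h],
      pathWeightSum, Finset.sum_mul]
    refine Finset.sum_congr rfl fun σ hσ => ?_
    obtain ⟨hkσ, -, hσ⟩ := mem_incPaths.1 hσ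
    exact pathWeight_insert L hkσ (fun m hm => (hσ m hm).1) hjk
  · intro k hk k' hk' hkk'
    simp only [Function.onFun, Finset.disjoint_left, Finset.mem_image, not_exists, not_and]
    rintro _ ⟨σ, hσ, rfl⟩ σ' hσ' h
    have hσσ' : σ' = σ := by
      rw [← erase_insert_of_mem_incPaths (Finset.mem_Ioi.1 hk') hσ', h,
        erase_insert_of_mem_incPaths (Finset.mem_Ioi.1 hk) hσ]
    exact hkk' (eq_of_mem_incPaths hσ (hσσ' ▸ hσ'))

lemma pathWeightSum_eq {L : Fin N → Fin N → Matrix (Fin n) (Fin n) ℝ}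
    (hL : ∀ k j, k ≤ j → L k j = 0) (j i : Fin N) :
    pathWeightSum L j i = (if j = i then 1 else 0) + ∑ k, pathWeightSum L k i * L k j := by
  have hIoi : ∑ k, pathWeightSum L k i * L k j =
      ∑ k ∈ Finset.Ioi j, pathWeightSum L k i * L k j :=
    (Finset.sum_subset (Finset.subset_univ _) fun k _ hk => by
      rw [hL k j (not_lt.1 (by simpa using hk)), mul_zero]).symm
  rw [hIoi]
  rcases lt_or_ge j i with hji | hij
  · rw [if_neg hji.ne, zero_add, pathWeightSum_of_lt L hji]
  · rw [Finset.sum_eq_zero fun k hk => by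
      rw [pathWeightSum_eq_zero_of_lt L (hij.trans_lt (Finset.mem_Ioi.1 hk)), zero_mul], add_zero]
    rcases hij.lt_or_eq with hij | rfl
    · rw [if_neg hij.ne', pathWeightSum_eq_zero_of_lt L hij]
    · rw [if_pos rfl, pathWeightSum_self]

lemma blockMulVecLin_pathWeightSum_mul_one_sub {L : Fin N → Fin N → Matrix (Fin n) (Fin n) ℝ}
    (hL : ∀ k j, k ≤ j → L k j = 0) :
    blockMulVecLin (fun i j => pathWeightSum L j i) * (1 - blockMulVecLin L) = 1 := by
  rw [mul_sub, mul_one, blockMulVecLin_mul, sub_eq_iff_eq_add]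
  refine LinearMap.ext fun v => funext fun i => ?_
  simp only [LinearMap.add_apply, Pi.add_apply, blockMulVecLin_apply, Module.End.one_apply]
  calc ∑ j, pathWeightSum L j i *ᵥ v j
      = ∑ j, ((if j = i then 1 else 0) + ∑ k, pathWeightSum L k i * L k j) *ᵥ v j :=
        Finset.sum_congr rfl fun j _ => by rw [← pathWeightSum_eq hL]
    _ = v i + ∑ j, (∑ k, pathWeightSum L k i * L k j) *ᵥ v j := by
        simp only [add_mulVec, Finset.sum_add_distrib]
        rw [Finset.sum_eq_single i (fun j _ hj => by rw [if_neg hj, zero_mulVec]) (by simp),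
          if_pos rfl, one_mulVec]

lemma eq_add_blockMulVecLin_iff {L : Fin N → Fin N → Matrix (Fin n) (Fin n) ℝ}
    (hL : ∀ k j, k ≤ j → L k j = 0) (c y : Fin N → Fin n → ℝ) :
    y = c + blockMulVecLin L y ↔ y = blockMulVecLin (fun i j => pathWeightSum L j i) c := by
  have hleft := blockMulVecLin_pathWeightSum_mul_one_sub hL
  -- a left inverse of an endomorphism of a finite-dimensional space is a right inverse
  have hright := mul_eq_one_comm.1 hleft
  constructor
  · intro hy
    calc y = (blockMulVecLin (fun i j => pathWeightSum L j i) * (1 - blockMulVecLin L)) y := by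
          rw [hleft, Module.End.one_apply]
      _ = _ := by
          rw [Module.End.mul_apply, LinearMap.sub_apply, Module.End.one_apply,
            sub_eq_of_eq_add hy]
  · rintro rfl
    have h := LinearMap.congr_fun hright c
    rw [Module.End.mul_apply, LinearMap.sub_apply, Module.End.one_apply,
      Module.End.one_apply] at h
    exact eq_add_of_sub_eq h

end IncreasingPaths

section Integrals

open MeasureTheory

variable {m : Type*} [Fintype m] {a b : ℝ}

lemma IntervalIntegrable.const_mulVec (M : Matrix m m ℝ) {f : ℝ → m → ℝ}
    (hf : IntervalIntegrable f volume a b) : IntervalIntegrable (fun t => M *ᵥ f t) volume a b :=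
  ⟨M.mulVecLin.toContinuousLinearMap.integrable_comp hf.1,
    M.mulVecLin.toContinuousLinearMap.integrable_comp hf.2⟩

lemma intervalIntegral_const_mulVec (M : Matrix m m ℝ) {f : ℝ → m → ℝ}
    (hf : IntervalIntegrable f volume a b) : ∫ t in a..b, M *ᵥ f t = M *ᵥ ∫ t in a..b, f t :=
  M.mulVecLin.toContinuousLinearMap.intervalIntegral_comp_comm hf

lemma intervalIntegrable_mulVec_of_bounded {K : ℝ → Matrix m m ℝ} {x : ℝ → m → ℝ}
    (hab : a ≤ b) (hK : ∀ p q, Measurable fun t => K t p q) (hx : Measurable x)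
    (hKb : ∃ M, ∀ t, ‖K t‖ ≤ M) (hxb : ∃ M, ∀ t ∈ Icc a b, ‖x t‖ ≤ M) :
    IntervalIntegrable (fun t => K t *ᵥ x t) volume a b := by
  obtain ⟨MK, hMK⟩ := hKb
  obtain ⟨Mx, hMx⟩ := hxb
  have hmeas : Measurable fun t => K t *ᵥ x t := measurable_pi_lambda _ fun p => by
    simp only [mulVec, dotProduct]
    exact Finset.measurable_sum _ fun q _ => (hK p q).mul ((measurable_pi_apply q).comp hx)
  rw [intervalIntegrable_iff_integrableOn_Icc_of_le hab]
  refine IntegrableOn.of_bound measure_Icc_lt_top hmeas.aestronglyMeasurable (MK * Mx)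
    (ae_restrict_of_forall_mem measurableSet_Icc fun t ht => ?_)
  calc ‖K t *ᵥ x t‖ ≤ ‖K t‖ * ‖x t‖ := linfty_opNorm_mulVec _ _
    _ ≤ MK * Mx := mul_le_mul (hMK t) (hMx t ht) (norm_nonneg _) ((norm_nonneg _).trans (hMK t))

lemma intervalIntegral_eq_of_eqOn_zero {E : Type*} [NormedAddCommGroup E] [NormedSpace ℝ E]
    {f : ℝ → E} {c : ℝ} (hf : IntervalIntegrable f volume a b) (hac : a ≤ c) (hcb : c ≤ b)
    (hf0 : EqOn f 0 (Icc c b)) : ∫ t in a..b, f t = ∫ t in a..c, f t := by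
  have hcb0 : ∫ t in c..b, f t = 0 := by
    rw [intervalIntegral.integral_congr (g := fun _ => 0) (by rwa [uIcc_of_le hcb]),
      intervalIntegral.integral_zero]
  rw [← intervalIntegral.integral_add_adjacent_intervals
      (hf.mono_set (uIcc_subset_uIcc_left (Set.mem_uIcc_of_le hac hcb)))
      (hf.mono_set (uIcc_subset_uIcc_right (Set.mem_uIcc_of_le hac hcb))),
    hcb0, add_zero]

end Integrals

section ImpulsiveVolterra

open MeasureTheory

variable {N n : ℕ}

lemma forall_eq_add_sum_mulVec_iff {I : Set ℝ} {τ : Fin N → ℝ} (hτ : ∀ i, τ i ∈ I)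
    {L : ℝ → Fin N → Matrix (Fin n) (Fin n) ℝ} (hL : ∀ j k, j ≤ k → L (τ j) k = 0)
    (F x : ℝ → Fin n → ℝ) :
    (∀ s ∈ I, x s = F s + ∑ i, L s i *ᵥ x (τ i)) ↔
      ∀ s ∈ I, x s = F s + ∑ i, L s i *ᵥ
        blockMulVecLin (fun i j => pathWeightSum (fun i' j' => L (τ i') j') j i)
          (fun j => F (τ j)) i := by
  set u := blockMulVecLin (fun i j => pathWeightSum (fun i' j' => L (τ i') j') j i)
    (fun j => F (τ j))
  have hjump : ∀ y : Fin N → Fin n → ℝ, (∀ s ∈ I, x s = F s + ∑ i, L s i *ᵥ y i) →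
      (fun j => x (τ j)) = (fun j => F (τ j)) + blockMulVecLin (fun i' j' => L (τ i') j') y :=
    fun y hy => funext fun j => by simpa using hy (τ j) (hτ j)
  suffices hxu : (∀ s ∈ I, x s = F s + ∑ i, L s i *ᵥ x (τ i)) ∨
      (∀ s ∈ I, x s = F s + ∑ i, L s i *ᵥ u i) → (fun j => x (τ j)) = u by
    refine ⟨fun hx => ?_, fun hx => ?_⟩ <;>
    · have hxτ : ∀ i, x (τ i) = u i := congrFun (hxu (by tauto))
      simpa only [hxτ] using hx
  rintro (hx | hx)
  · exact (eq_add_blockMulVecLin_iff hL _ _).1 (hjump _ hx)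
  · rw [hjump _ hx]
    exact ((eq_add_blockMulVecLin_iff hL _ _).2 rfl).symm

noncomputable def volterraRhs (h : ℝ → Fin n → ℝ) (K : ℝ → ℝ → Matrix (Fin n) (Fin n) ℝ)
    (x : ℝ → Fin n → ℝ) (s : ℝ) : Fin n → ℝ :=
  h s + ∫ t in (0 : ℝ)..s, K s t *ᵥ x t

def impulseResolvent (τ : Fin N → ℝ) (L : ℝ → Fin N → Matrix (Fin n) (Fin n) ℝ) (s : ℝ)
    (j : Fin N) : Matrix (Fin n) (Fin n) ℝ :=
  ∑ i, L s i * pathWeightSum (fun i' j' => L (τ i') j') j i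

lemma sum_impulseResolvent_mulVec (τ : Fin N → ℝ) (L : ℝ → Fin N → Matrix (Fin n) (Fin n) ℝ)
    (s : ℝ) (c : Fin N → Fin n → ℝ) :
    ∑ j, impulseResolvent τ L s j *ᵥ c j =
      ∑ i, L s i *ᵥ
        blockMulVecLin (fun i j => pathWeightSum (fun i' j' => L (τ i') j') j i) c i := by
  simp only [impulseResolvent, blockMulVecLin_apply, sum_mulVec, mulVec_sum, mulVec_mulVec]
  exact Finset.sum_comm

lemma impulseResolvent_eq_zero {τ : Fin N → ℝ} (hτ : Monotone τ)
    {L : ℝ → Fin N → Matrix (Fin n) (Fin n) ℝ} (hL : ∀ s i, s ≤ τ i → L s i = 0) {s : ℝ}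
    {j : Fin N} (hs : s ≤ τ j) : impulseResolvent τ L s j = 0 := by
  refine Finset.sum_eq_zero fun i _ => ?_
  rcases le_or_gt j i with hji | hij
  · rw [hL s i (hs.trans (hτ hji)), zero_mul]
  · rw [pathWeightSum_eq_zero_of_lt _ hij, mul_zero]

lemma sum_incPaths_mulVec (τ : Fin N → ℝ) (L : ℝ → Fin N → Matrix (Fin n) (Fin n) ℝ) (s : ℝ)
    (v : Fin N → Fin n → ℝ) :
    ∑ i, ∑ j, ∑ σ ∈ incPaths j i, (L s i * pathWeight (fun i' j' => L (τ i') j') σ) *ᵥ v j =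
      ∑ j, impulseResolvent τ L s j *ᵥ v j := by
  simp only [impulseResolvent, pathWeightSum, sum_mulVec, Finset.mul_sum]
  exact Finset.sum_comm

lemma modifiedKernel_mulVec (τ : Fin N → ℝ) (K : ℝ → ℝ → Matrix (Fin n) (Fin n) ℝ)
    (L : ℝ → Fin N → Matrix (Fin n) (Fin n) ℝ) (s t : ℝ) (v : Fin n → ℝ) :
    (K s t + ∑ i, ∑ j, ∑ σ ∈ incPaths j i,
        L s i * pathWeight (fun i' j' => L (τ i') j') σ * K (τ j) t) *ᵥ v =
      K s t *ᵥ v + ∑ j, impulseResolvent τ L s j *ᵥ (K (τ j) t *ᵥ v) := by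
  rw [add_mulVec, ← sum_incPaths_mulVec]
  simp only [sum_mulVec, mulVec_mulVec]

lemma modifiedVolterraRhs_eq {τ : Fin N → ℝ} (hτ : Monotone τ) (hτ0 : ∀ j, 0 ≤ τ j)
    {K : ℝ → ℝ → Matrix (Fin n) (Fin n) ℝ} (hK : ∀ s t, s ≤ t → K s t = 0)
    {L : ℝ → Fin N → Matrix (Fin n) (Fin n) ℝ} (hL : ∀ s i, s ≤ τ i → L s i = 0)
    (h x : ℝ → Fin n → ℝ) {s : ℝ}
    (hKx : ∀ r, IntervalIntegrable (fun t => K r t *ᵥ x t) volume 0 s) :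
    (h s + ∑ i, ∑ j, ∑ σ ∈ incPaths j i,
        (L s i * pathWeight (fun i' j' => L (τ i') j') σ) *ᵥ h (τ j)) +
      ∫ t in (0 : ℝ)..s, (K s t + ∑ i, ∑ j, ∑ σ ∈ incPaths j i,
        L s i * pathWeight (fun i' j' => L (τ i') j') σ * K (τ j) t) *ᵥ x t =
      volterraRhs h K x s + ∑ j, impulseResolvent τ L s j *ᵥ volterraRhs h K x (τ j) := by
  have hint : ∀ j, IntervalIntegrable
      (fun t => impulseResolvent τ L s j *ᵥ (K (τ j) t *ᵥ x t)) volume 0 s :=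
    fun j => (hKx _).const_mulVec _
  have hsum : IntervalIntegrable
      (fun t => ∑ j, impulseResolvent τ L s j *ᵥ (K (τ j) t *ᵥ x t)) volume 0 s := by
    simpa only [Finset.sum_fn] using IntervalIntegrable.sum Finset.univ fun j _ => hint j
  have htrunc : ∀ j, impulseResolvent τ L s j *ᵥ ∫ t in (0 : ℝ)..s, K (τ j) t *ᵥ x t =
      impulseResolvent τ L s j *ᵥ ∫ t in (0 : ℝ)..τ j, K (τ j) t *ᵥ x t := by
    intro j
    rcases le_or_gt (τ j) s with hjs | hsj
    · rw [intervalIntegral_eq_of_eqOn_zero (hKx _) (hτ0 j) hjs fun t ht => by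
        simp [hK _ _ ht.1]]
    · rw [impulseResolvent_eq_zero hτ hL hsj.le, zero_mulVec, zero_mulVec]
  simp only [modifiedKernel_mulVec, sum_incPaths_mulVec]
  rw [intervalIntegral.integral_add (hKx s) hsum,
    intervalIntegral.integral_finsetSum fun j _ => hint j]
  simp only [intervalIntegral_const_mulVec _ (hKx _), htrunc, volterraRhs, mulVec_add,
    Finset.sum_add_distrib]
  abel

end ImpulsiveVolterra

theorem impulsive_linear_volterra_iff_modified_kernel_general
    (n N : ℕ) (T : ℝ)
    (τ : Fin N → ℝ) (hτmono : StrictMono τ) (hτpos : ∀ i, 0 < τ i) (hτlt : ∀ i, τ i < T)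
    (K : ℝ → ℝ → Matrix (Fin n) (Fin n) ℝ)
    (hKmeas : ∀ i j : Fin n, Measurable (fun p : ℝ × ℝ => K p.1 p.2 i j))
    (hKbdd : ∃ M : ℝ, ∀ s t : ℝ, ‖K s t‖ ≤ M)
    (hKzero : ∀ s t : ℝ, s ≤ t → K s t = 0)
    (L : ℝ → Fin N → Matrix (Fin n) (Fin n) ℝ)
    (hLzero : ∀ (s : ℝ) (i : Fin N), s ≤ τ i → L s i = 0)
    (h : ℝ → (Fin n → ℝ))
    (x : ℝ → (Fin n → ℝ)) (hxmeas : Measurable x)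
    (hxbdd : ∃ M : ℝ, ∀ t ∈ Icc 0 T, ‖x t‖ ≤ M) :
    (∀ s ∈ Icc 0 T,
      x s = h s + (∫ t in (0:ℝ)..s, (K s t).mulVec (x t)) +
        ∑ i ∈ Finset.univ.filter (fun i : Fin N => τ i < s), (L s i).mulVec (x (τ i)))
    ↔
    (∀ s ∈ Icc 0 T,
      x s = (h s + ∑ i : Fin N, ∑ j : Fin N, ∑ σ ∈ incPaths j i,
          (L s i * pathWeight (fun i' j' => L (τ i') j') σ).mulVec (h (τ j))) +
        ∫ t in (0:ℝ)..s,
          (K s t + ∑ i : Fin N, ∑ j : Fin N, ∑ σ ∈ incPaths j i,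
            L s i * pathWeight (fun i' j' => L (τ i') j') σ * K (τ j) t).mulVec (x t)) := by
  have hfilter (s : ℝ) : ∑ i ∈ Finset.univ.filter (τ · < s), L s i *ᵥ x (τ i) =
      ∑ i, L s i *ᵥ x (τ i) :=
    Finset.sum_filter_of_ne fun i _ hi =>
      not_le.1 fun hsi => hi (by rw [hLzero s i hsi, zero_mulVec])
  have hKx : ∀ s ∈ Icc 0 T, ∀ r,
      IntervalIntegrable (fun t => K r t *ᵥ x t) MeasureTheory.volume 0 s :=
    fun s hs r => intervalIntegrable_mulVec_of_bounded hs.1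
      (fun p q => (hKmeas p q).comp measurable_prodMk_left) hxmeas
      (hKbdd.imp fun _ hM => hM r) (hxbdd.imp fun _ hM t ht => hM t ⟨ht.1, ht.2.trans hs.2⟩)
  simp_rw [hfilter]
  refine (forall_eq_add_sum_mulVec_iff (I := Icc 0 T) (fun i => ⟨(hτpos i).le, (hτlt i).le⟩)
    (fun j k hjk => hLzero _ _ (hτmono.monotone hjk)) (volterraRhs h K x) x).trans
      (forall₂_congr fun s hs => ?_)
  rw [modifiedVolterraRhs_eq hτmono.monotone (fun j => (hτpos j).le) hKzero hLzero h x
    (hKx s hs), sum_impulseResolvent_mulVec]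

/-- **Theorem 4.2.** The impulsive linear Volterra equation
`x(s) = h(s) + ∫₀ˢ K(s,t)x(t)dt + ∑_{τᵢ<s} L(s,i)x(τᵢ)` is equivalent to the ordinary linear
Volterra equation `x(s) = 𝐡(s) + ∫₀ˢ 𝐊(s,t)x(t)dt` with the modified kernel
`𝐊(s,t) = K(s,t) + ∑_{i,j} ∑_{σ∈P(j,i)} L(s,i)·Λ(σ)·K(τⱼ,t)` and forcing term
`𝐡(s) = h(s) + ∑_{i,j} ∑_{σ∈P(j,i)} L(s,i)·Λ(σ)·h(τⱼ)`. -/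
theorem impulsive_linear_volterra_iff_modified_kernel
    (n N : ℕ) (T : ℝ) (hT : 0 < T)
    (τ : Fin N → ℝ) (hτmono : StrictMono τ) (hτpos : ∀ i, 0 < τ i) (hτlt : ∀ i, τ i < T)
    (K : ℝ → ℝ → Matrix (Fin n) (Fin n) ℝ)
    (hKmeas : ∀ i j : Fin n, Measurable (fun p : ℝ × ℝ => K p.1 p.2 i j))
    (hKbdd : ∃ M : ℝ, ∀ s t : ℝ, ‖K s t‖ ≤ M)
    (hKzero : ∀ s t : ℝ, s ≤ t → K s t = 0)
    (L : ℝ → Fin N → Matrix (Fin n) (Fin n) ℝ)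
    (hLmeas : ∀ (i : Fin N) (p q : Fin n), Measurable (fun s : ℝ => L s i p q))
    (hLbdd : ∃ M : ℝ, ∀ (s : ℝ) (i : Fin N), ‖L s i‖ ≤ M)
    (hLzero : ∀ (s : ℝ) (i : Fin N), s ≤ τ i → L s i = 0)
    (h : ℝ → (Fin n → ℝ)) (hhmeas : Measurable h) (hhbdd : ∃ M : ℝ, ∀ t ∈ Icc 0 T, ‖h t‖ ≤ M)
    (x : ℝ → (Fin n → ℝ)) (hxmeas : Measurable x)
    (hxbdd : ∃ M : ℝ, ∀ t ∈ Icc 0 T, ‖x t‖ ≤ M)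
    (hxlc : ∀ i : Fin N, Tendsto x (nhdsWithin (τ i) (Iio (τ i))) (nhds (x (τ i)))) :
    (∀ s ∈ Icc 0 T,
      x s = h s + (∫ t in (0:ℝ)..s, (K s t).mulVec (x t)) +
        ∑ i ∈ Finset.univ.filter (fun i : Fin N => τ i < s), (L s i).mulVec (x (τ i)))
    ↔
    (∀ s ∈ Icc 0 T,
      x s = (h s + ∑ i : Fin N, ∑ j : Fin N, ∑ σ ∈ incPaths j i,
          (L s i * pathWeight (fun i' j' => L (τ i') j') σ).mulVec (h (τ j))) +
        ∫ t in (0:ℝ)..s,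
          (K s t + ∑ i : Fin N, ∑ j : Fin N, ∑ σ ∈ incPaths j i,
            L s i * pathWeight (fun i' j' => L (τ i') j') σ * K (τ j) t).mulVec (x t)) :=
  impulsive_linear_volterra_iff_modified_kernel_general n N T τ hτmono hτpos hτlt K hKmeas hKbdd
    hKzero L hLzero h x hxmeas hxbdd
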